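/- Every element x of the subalgebra 𝔗 = Σ_{1≤i<j≤n}[X_{ij}(R), X_{ji}(R)] of st_n(R) can be written as x = Σ_i t(a_i, b_i) + Σ_{2≤j≤n} T_{1j}(1, c_j) for suitable a_i, b_i, c_j ∈ R. -/
import Mathlib


/-- The defining relations of the Steinberg Lie algebra `st_n(R)`, for a family of
`K`-linear maps `X i j : R → L` (playing the role of `a ↦ X_{ij}(a)`). -/
structure SteinbergRel (K R : Type) [CommRing K] [Ring R] [Algebra K R]
    (n : ℕ) (L : Type) [LieRing L] [LieAlgebra K L]
    (X : Fin n → Fin n → R →ₗ[K] L) : Prop where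
  bracket_mul : ∀ ⦃i j k : Fin n⦄, i ≠ j → j ≠ k → i ≠ k → ∀ a b : R,
    ⁅X i j a, X j k b⁆ = X i k (a * b)
  bracket_zero : ∀ ⦃i j k l : Fin n⦄, i ≠ j → k ≠ l → j ≠ k → i ≠ l → ∀ a b : R,
    ⁅X i j a, X k l b⁆ = 0

/-- `L` together with the family `X` *is* the Steinberg Lie algebra `st_n(R)`:
the relations hold, `L` is generated by the `X_{ij}(a)`, and `(L, X)` is initial among
Lie algebras equipped with such a family. -/
structure IsSteinberg (K R : Type) [CommRing K] [Ring R] [Algebra K R]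
    (n : ℕ) (L : Type) [LieRing L] [LieAlgebra K L]
    (X : Fin n → Fin n → R →ₗ[K] L) extends SteinbergRel K R n L X : Prop where
  span_top : LieSubalgebra.lieSpan K L
    (⋃ (i : Fin n) (j : Fin n) (_ : i ≠ j), Set.range (X i j)) = ⊤
  initial : ∀ (L' : Type) [LieRing L'] [LieAlgebra K L']
    (X' : Fin n → Fin n → R →ₗ[K] L'), SteinbergRel K R n L' X' →
    ∃ f : L →ₗ⁅K⁆ L', ∀ i j a, f (X i j a) = X' i j a

/-- Every element `x` of the subalgebra `𝔗 = Σ_{i<j} ⁅X_{ij}(R), X_{ji}(R)⁆` of `st_n(R)` can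
be written as `x = Σ_p t(a_p, b_p) + Σ_{j ≠ 1} T_{1j}(1, c_j)`, where
`T_{ij}(a,b) = ⁅X_{ij}(a), X_{ji}(b)⁆`, `t(a,b) = T_{1j}(a,b) - T_{1j}(1, ba)` (computed with
`j` the index `2`), and the paper's indices `1, 2` are `0, 1 : Fin n`. -/
theorem steinberg_T_decomposition (K R L : Type) [CommRing K] [Ring R] [Algebra K R]
    [LieRing L] [LieAlgebra K L] (n : ℕ) (hn : 3 ≤ n)
    (X : Fin n → Fin n → R →ₗ[K] L) (h : IsSteinberg K R n L X)
    (o o' : Fin n) (ho : o = ⟨0, by omega⟩) (ho' : o' = ⟨1, by omega⟩)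
    (T : Submodule K L)
    (hT : T = ⨆ (i : Fin n) (j : Fin n) (_ : i < j),
      Submodule.span K {x : L | ∃ a b : R, x = ⁅X i j a, X j i b⁆}) :
    ∀ x ∈ T, ∃ (m : ℕ) (a b : Fin m → R) (c : Fin n → R),
      x = (∑ p : Fin m,
            (⁅X o o' (a p), X o' o (b p)⁆ - ⁅X o o' 1, X o' o (b p * a p)⁆))
          + ∑ j ∈ Finset.univ.erase o, ⁅X o j 1, X j o (c j)⁆ := by
  obtain ⟨⟨hmul, -⟩, -, -⟩ := h
  have hoo' : o ≠ o' := by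
    subst ho ho'; simp [Fin.ext_iff]
  have key : ∀ (i j k : Fin n), i ≠ j → j ≠ k → i ≠ k → ∀ a b : R,
      ⁅X i j a, X j i b⁆ = ⁅X i k (a * b), X k i 1⁆ - ⁅X j k b, X k j a⁆ := by
    intro i j k hij hjk hik a b
    have e1 : X j i b = ⁅X j k b, X k i 1⁆ := by
      rw [hmul hjk (Ne.symm hik) (Ne.symm hij), mul_one]
    have e2 : ⁅X i j a, X k i 1⁆ = -X k j a := by
      rw [← lie_skew, hmul (Ne.symm hik) hij (Ne.symm hjk), one_mul]
    rw [e1, leibniz_lie, hmul hij hjk hik, e2, lie_neg, sub_eq_add_neg]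
  let S : Submodule K L :=
  { carrier := {x | ∃ m, ∃ a b : Fin m → R, ∃ c : Fin n → R,
      x = (∑ p : Fin m,
            (⁅X o o' (a p), X o' o (b p)⁆ - ⁅X o o' 1, X o' o (b p * a p)⁆))
          + ∑ j ∈ Finset.univ.erase o, ⁅X o j 1, X j o (c j)⁆}
    zero_mem' := ⟨0, ![], ![], 0, by simp⟩
    add_mem' := by
      rintro x y ⟨m, a, b, c, rfl⟩ ⟨m', a', b', c', rfl⟩
      refine ⟨m + m', Fin.append a a', Fin.append b b', c + c', ?_⟩
      rw [Fin.sum_univ_add]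
      simp only [Fin.append_left, Fin.append_right, Pi.add_apply, map_add, lie_add,
        Finset.sum_add_distrib]
      abel
    smul_mem' := by
      rintro k x ⟨m, a, b, c, rfl⟩
      refine ⟨m, a, k • b, k • c, ?_⟩
      simp only [Pi.smul_apply, map_smul, lie_smul, smul_mul_assoc, smul_sub,
        Finset.smul_sum, smul_add] }
  have mem1 : ∀ j : Fin n, j ≠ o → ∀ c : R, ⁅X o j 1, X j o c⁆ ∈ S := by
    intro j hj c
    refine ⟨0, ![], ![], fun j' => if j' = j then c else 0, ?_⟩
    rw [Finset.sum_eq_single_of_mem j (Finset.mem_erase.mpr ⟨hj, Finset.mem_univ j⟩)]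
    · simp
    · intro j' _ hne
      simp [hne]
  have mem2 : ∀ a b : R,
      ⁅X o o' a, X o' o b⁆ - ⁅X o o' 1, X o' o (b * a)⁆ ∈ S := by
    intro a b
    exact ⟨1, ![a], ![b], 0, by simp⟩
  have memA : ∀ a b : R, ⁅X o o' a, X o' o b⁆ ∈ S := by
    intro a b
    have := S.add_mem (mem2 a b) (mem1 o' hoo'.symm (b * a))
    rwa [sub_add_cancel] at this
  have memB : ∀ j : Fin n, j ≠ o → ∀ a b : R, ⁅X o j a, X j o b⁆ ∈ S := by
    intro j hj a b
    by_cases hj' : j = o'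
    · subst hj'; exact memA a b
    · have e := key o j o' (Ne.symm hj) hj' hoo' a b
      have e2 := key j o' o hj' (Ne.symm hoo') hj b a
      have s1 : ⁅X j o (b * a), X o j 1⁆ = -⁅X o j 1, X j o (b * a)⁆ :=
        neg_eq_iff_eq_neg.mp (lie_skew (X o j 1) (X j o (b * a)))
      have s2 : ⁅X o' o a, X o o' b⁆ = -⁅X o o' b, X o' o a⁆ :=
        neg_eq_iff_eq_neg.mp (lie_skew (X o o' b) (X o' o a))
      rw [e, e2, s1, s2]
      exact S.sub_mem (memA _ _)
        (S.sub_mem (S.neg_mem (mem1 j hj _)) (S.neg_mem (memA _ _)))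
  have memC : ∀ i j : Fin n, i ≠ o → j ≠ o → i ≠ j → ∀ a b : R,
      ⁅X i j a, X j i b⁆ ∈ S := by
    intro i j hi hj hij a b
    have e := key i j o hij hj hi a b
    have s1 : ⁅X i o (a * b), X o i 1⁆ = -⁅X o i 1, X i o (a * b)⁆ :=
      neg_eq_iff_eq_neg.mp (lie_skew (X o i 1) (X i o (a * b)))
    have s2 : ⁅X j o b, X o j a⁆ = -⁅X o j a, X j o b⁆ :=
      neg_eq_iff_eq_neg.mp (lie_skew (X o j a) (X j o b))
    rw [e, s1, s2]
    exact S.sub_mem (S.neg_mem (mem1 i hi _)) (S.neg_mem (memB j hj _ _))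
  have hle : T ≤ S := by
    rw [hT]
    refine iSup_le fun i => iSup_le fun j => iSup_le fun hij => Submodule.span_le.mpr ?_
    rintro x ⟨a, b, rfl⟩
    have hjo : j ≠ o := by
      intro hj
      subst hj; subst ho
      exact absurd hij (by simp [Fin.lt_def])
    by_cases hio : i = o
    · subst hio; exact memB j hjo a b
    · exact memC i j hio hjo (ne_of_lt hij) a b
  intro x hx
  exact hle hx
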